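/- Let n ≥ 1, let λ : Fin n → ℝ satisfy λᵢ > 0 for all i, let c̄ : Fin n → ℝ, and let S := {i : c̄ᵢ ≠ 0}. Define f(β) := −β − Σ_{i ∈ S} c̄ᵢ² λᵢ β/(λᵢ β − 1), let λ_min := min_i λᵢ, and let I := (1/λ_min, ∞) if there exists i ∈ S with λᵢ = λ_min, and I := [1/λ_min, ∞) otherwise. Then f(β) < 0 for every β ∈ I. -/

import Mathlib

/-! On `I` every index `i` of the support satisfies `λᵢβ > 1`, so each summand
`c̄ᵢ² λᵢβ/(λᵢβ − 1)` is nonnegative and `f(β) ≤ −β < 0`. -/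

open Matrix

noncomputable section

/-- The minimum of the eigenvalues `λ i`, for `n ≥ 1`. -/
def lamMin {n : ℕ} (hn : 1 ≤ n) (lam : Fin n → ℝ) : ℝ :=
  Finset.univ.inf' ⟨⟨0, hn⟩, Finset.mem_univ _⟩ lam

open Classical in
/-- The dual function `ℓ_{c,P}(β) = −β − Σ_{i ∈ S(c̄)} c̄ᵢ² λᵢβ/(λᵢβ−1)`,
expressed via the eigenvalues `λ` of `P` and the coordinates `c̄` of the center
in an orthonormal eigenbasis of `P`. -/
def ellFun {n : ℕ} (lam cbar : Fin n → ℝ) (β : ℝ) : ℝ :=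
  -β - ∑ i ∈ Finset.univ.filter (fun i => cbar i ≠ 0),
    (cbar i) ^ 2 * (lam i * β / (lam i * β - 1))

open Classical in
/-- The domain `I` of the dual function: the open half-line `(1/λ_min, ∞)` if some
`i` in the support of `c̄` achieves `λ_min`, and the closed half-line `[1/λ_min, ∞)`
otherwise. -/
def ellDom {n : ℕ} (lam cbar : Fin n → ℝ) (lammin : ℝ) : Set ℝ :=
  if ∃ i, cbar i ≠ 0 ∧ lam i = lammin then Set.Ioi (1 / lammin) else Set.Ici (1 / lammin)

theorem lamMin_le {n : ℕ} (hn : 1 ≤ n) (lam : Fin n → ℝ) (i : Fin n) : lamMin hn lam ≤ lam i :=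
  Finset.inf'_le _ (Finset.mem_univ i)

theorem lamMin_pos {n : ℕ} (hn : 1 ≤ n) {lam : Fin n → ℝ} (hlam : ∀ i, 0 < lam i) :
    0 < lamMin hn lam :=
  (Finset.lt_inf'_iff _).2 fun i _ => hlam i

section ellDom

variable {n : ℕ} {lam cbar : Fin n → ℝ} {m β : ℝ}

theorem one_div_le_of_mem_ellDom (hβ : β ∈ ellDom lam cbar m) : 1 / m ≤ β := by
  unfold ellDom at hβ
  split_ifs at hβ
  exacts [le_of_lt hβ, hβ]

theorem pos_of_mem_ellDom (hm : 0 < m) (hβ : β ∈ ellDom lam cbar m) : 0 < β :=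
  lt_of_lt_of_le (by positivity) (one_div_le_of_mem_ellDom hβ)

/-- The closed end `1/m` is admitted only when no index of the support attains `m`,
and then `m < λᵢ` strictly. -/
theorem one_lt_mul_of_mem_ellDom (hm : 0 < m) (hle : ∀ i, m ≤ lam i)
    (hβ : β ∈ ellDom lam cbar m) {i : Fin n} (hi : cbar i ≠ 0) : 1 < lam i * β := by
  have hβpos := pos_of_mem_ellDom hm hβ
  have hone : m * (1 / m) = 1 := mul_one_div_cancel hm.ne'
  unfold ellDom at hβ
  split_ifs at hβ with hattained
  · calc 1 = m * (1 / m) := hone.symm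
      _ < m * β := mul_lt_mul_of_pos_left hβ hm
      _ ≤ lam i * β := mul_le_mul_of_nonneg_right (hle i) hβpos.le
  · have hlt : m < lam i := (hle i).lt_of_ne fun h => hattained ⟨i, hi, h.symm⟩
    calc 1 = m * (1 / m) := hone.symm
      _ ≤ m * β := mul_le_mul_of_nonneg_left hβ hm.le
      _ < lam i * β := mul_lt_mul_of_pos_right hlt hβpos

end ellDom

theorem ellFun_neg {n : ℕ} {lam cbar : Fin n → ℝ} {β : ℝ} (hβ : 0 < β)
    (hpole : ∀ i, cbar i ≠ 0 → 1 < lam i * β) : ellFun lam cbar β < 0 := by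
  refine sub_neg_of_lt ((neg_neg_of_pos hβ).trans_le (Finset.sum_nonneg fun i hi => ?_))
  have h := hpole i (Finset.mem_filter.1 hi).2
  exact mul_nonneg (sq_nonneg _) (div_nonneg (by linarith) (by linarith))

theorem stmt_6 {n : ℕ} (hn : 1 ≤ n) (lam cbar : Fin n → ℝ) (hlam : ∀ i, 0 < lam i) :
    ∀ β ∈ ellDom lam cbar (lamMin hn lam), ellFun lam cbar β < 0 := by
  intro β hβ
  have hmin := lamMin_pos hn hlam
  exact ellFun_neg (pos_of_mem_ellDom hmin hβ) fun i hi =>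
    one_lt_mul_of_mem_ellDom hmin (lamMin_le hn lam) hβ hi
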